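/- Let s, t, v, w ∈ V with v ∈ P_s(w), v ∉ {s,t} and t ≠ w, and let σ_{st}(v,w) denote the number of shortest s-t paths in G that use the edge (v,w). Then σ_{sw} · σ_{st}(v,w) = σ_{sv} · σ_{st}(w); equivalently, σ_{st}(v,w) = (σ_{sv}/σ_{sw}) · σ_{st}(w). -/

import Mathlib

/-! Since all weights are positive, cutting a cycle out of a walk makes it strictly lighter;
hence a prefix of a shortest path is a shortest path, and replacing the `s`-`w` prefix of a
shortest `s`-`t` path by any other shortest `s`-`w` path leaves it shortest. So the shortest
`s`-`t` paths through `w` are, uniquely, a shortest `s`-`w` path followed by a tail from the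
fixed set `SPTail s w t`, and, as `x ∈ P_s(w)`, those through the edge `(x, w)` are a shortest
`s`-`x` path, then `w`, then such a tail. Thus `σ_{st}(w) = σ_{sw} · |SPTail s w t|` and
`σ_{st}(x,w) = σ_{sx} · |SPTail s w t|`. -/

open scoped BigOperators

/-- A directed graph on vertex set `V` with positive real edge weights. -/
structure WDigraph (V : Type*) where
  /-- the edge relation -/
  E : V → V → Prop
  /-- the edge weights -/
  w : V → V → ℝ
  /-- weights of edges are positive -/
  pos : ∀ a b, E a b → 0 < w a b

namespace WDigraph

variable {V : Type*} [Fintype V] [DecidableEq V]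

/-- `p` is a simple path from `s` to `t` in `G`: a nonempty list of pairwise
distinct vertices starting at `s`, ending at `t`, consecutive vertices joined
by edges. (Since all weights are positive, every shortest path is simple, so
it suffices to consider simple paths throughout.) -/
def IsPath (G : WDigraph V) (s t : V) (p : List V) : Prop :=
  List.Chain' G.E p ∧ p.head? = some s ∧ p.getLast? = some t ∧ p.Nodup

/-- The total weight of a list of vertices (sum of the weights of consecutive pairs). -/
def pw (G : WDigraph V) : List V → ℝ
  | [] => 0
  | [_] => 0
  | a :: b :: r => G.w a b + G.pw (b :: r)

/-- `d(s,t)`: shortest-path distance from `s` to `t`, equal to `⊤` (infinity)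
if `t` is unreachable from `s`. -/
noncomputable def dist (G : WDigraph V) (s t : V) : EReal :=
  sInf ((fun p => (G.pw p : EReal)) '' {p | G.IsPath s t p})

/-- The set of shortest `s`-`t` paths in `G`. -/
def SP (G : WDigraph V) (s t : V) : Set (List V) :=
  {p | G.IsPath s t p ∧ (G.pw p : EReal) = G.dist s t}

/-- `σ_{st}`: the number of shortest `s`-`t` paths in `G`. -/
noncomputable def sigma (G : WDigraph V) (s t : V) : ℕ :=
  (G.SP s t).ncard

/-- `σ_{st}(v)`: the number of shortest `s`-`t` paths in `G` that contain `v`. -/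
noncomputable def sigmaV (G : WDigraph V) (s t v : V) : ℕ :=
  {p ∈ G.SP s t | v ∈ p}.ncard

/-- `σ_{st}(v,w)`: the number of shortest `s`-`t` paths in `G` using the edge `(v,w)`. -/
noncomputable def sigmaE (G : WDigraph V) (s t v w : V) : ℕ :=
  {p ∈ G.SP s t | [v, w] <:+: p}.ncard

/-- `P_s(t)`: the set of predecessors of `t` with respect to source `s`:
nodes `y` with `(y,t) ∈ E` and `d(s,y) + ω(y,t) = d(s,t) < ∞`. -/
def pred (G : WDigraph V) (s t : V) : Set V :=
  {y | G.E y t ∧ G.dist s y + (G.w y t : EReal) = G.dist s t ∧ G.dist s t < ⊤}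

/-- `δ_{s•}(v)`: Brandes's one-sided dependency of `s` on `v`
(a summand is `0` whenever its denominator is `0`, which is automatic since
in Lean division by zero yields zero). -/
noncomputable def delta (G : WDigraph V) (s v : V) : ℝ :=
  ∑ᶠ t ∈ {t : V | t ≠ s ∧ t ≠ v}, (G.sigmaV s t v : ℝ) / (G.sigma s t : ℝ)

/-- `c_B(v)`: the betweenness centrality of `v`. -/
noncomputable def bc (G : WDigraph V) (v : V) : ℝ :=
  ∑ᶠ s ∈ {s : V | s ≠ v}, G.delta s v

/-- `G'` is obtained from `G` by the incremental update `(u, v, ω'(u,v))`: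
either a new edge `(u,v) ∉ E` is inserted with positive weight, or the weight
of the existing edge `(u,v)` is decreased; all other edges and weights are
unchanged. (Positivity of all weights is part of the `WDigraph` structure.) -/
structure IsUpdate (G G' : WDigraph V) (u v : V) : Prop where
  /-- the updated edge is present in `G'` -/
  edge' : G'.E u v
  /-- `E' = E ∪ {(u,v)}` -/
  edge_iff : ∀ a b, G'.E a b ↔ G.E a b ∨ a = u ∧ b = v
  /-- `ω'` agrees with `ω` on all edges other than `(u,v)` -/
  weight_eq : ∀ a b, ¬(a = u ∧ b = v) → G'.w a b = G.w a b
  /-- either an insertion of a new edge, or a weight decrease of an existing one -/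
  insert_or_decrease : ¬ G.E u v ∨ (G.E u v ∧ G'.w u v < G.w u v)

/-- `S(t)`: the affected sources of `t`. -/
def affS (G G' : WDigraph V) (t : V) : Set V :=
  {s | G.dist s t > G'.dist s t ∨ G.sigma s t ≠ G'.sigma s t}

/-- `T(s)`: the affected targets of `s`. -/
def affT (G G' : WDigraph V) (s : V) : Set V :=
  {t | G.dist s t > G'.dist s t ∨ G.sigma s t ≠ G'.sigma s t}

/-- `Δ_{s•}(v) = Σ_{t ∈ T(s), t ≠ v} σ_{st}(v)/σ_{st}`, computed in `G`
(`0`-convention for zero denominators). -/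
noncomputable def Delta (G G' : WDigraph V) (s v : V) : ℝ :=
  ∑ᶠ t ∈ {t : V | t ∈ affT G G' s ∧ t ≠ v}, (G.sigmaV s t v : ℝ) / (G.sigma s t : ℝ)

/-- `Δ'_{s•}(v) = Σ_{t ∈ T(s), t ≠ v} σ'_{st}(v)/σ'_{st}`, computed in `G'`
(`0`-convention for zero denominators). -/
noncomputable def Delta' (G G' : WDigraph V) (s v : V) : ℝ :=
  ∑ᶠ t ∈ {t : V | t ∈ affT G G' s ∧ t ≠ v}, (G'.sigmaV s t v : ℝ) / (G'.sigma s t : ℝ)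

end WDigraph

namespace WDigraph

variable {V : Type*} {G : WDigraph V}

def IsWalk (G : WDigraph V) (s t : V) (p : List V) : Prop :=
  List.IsChain G.E p ∧ p.head? = some s ∧ p.getLast? = some t

lemma isPath_iff {s t : V} {p : List V} : G.IsPath s t p ↔ G.IsWalk s t p ∧ p.Nodup :=
  ⟨fun ⟨hc, hs, ht, hnd⟩ => ⟨⟨hc, hs, ht⟩, hnd⟩, fun ⟨⟨hc, hs, ht⟩, hnd⟩ => ⟨hc, hs, ht, hnd⟩⟩

lemma isWalk_append_cons_iff {s t z : V} {l c : List V} :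
    G.IsWalk s t (l ++ z :: c) ↔ G.IsWalk s z (l ++ [z]) ∧ G.IsWalk z t (z :: c) := by
  have hhead : (l ++ z :: c).head? = (l ++ [z]).head? := by cases l <;> simp
  have hlast : (l ++ z :: c).getLast? = (z :: c).getLast? := by
    rw [List.getLast?_append, List.getLast?_cons]; rfl
  rw [IsWalk, IsWalk, IsWalk, List.isChain_split, hhead, hlast, List.getLast?_concat,
    List.head?_cons]
  tauto

lemma pw_append_cons (l c : List V) (z : V) :
    G.pw (l ++ z :: c) = G.pw (l ++ [z]) + G.pw (z :: c) := by
  induction l with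
  | nil => simp [pw]
  | cons a l ih =>
    cases l with
    | nil => simp [pw]
    | cons b l => simp only [List.cons_append, pw] at ih ⊢; rw [ih]; ring

lemma pw_nonneg : ∀ {p : List V}, List.IsChain G.E p → 0 ≤ G.pw p
  | [], _ | [_], _ => le_rfl
  | a :: b :: r, h => by
    rw [List.isChain_cons_cons] at h
    have := G.pos a b h.1
    have := pw_nonneg h.2
    simp only [pw]; linarith

lemma pw_pos {p : List V} (h : List.IsChain G.E p) (hp : 2 ≤ p.length) : 0 < G.pw p := by
  match p, hp, h with
  | a :: b :: r, _, h =>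
    rw [List.isChain_cons_cons] at h
    have := G.pos a b h.1
    have := pw_nonneg h.2
    simp only [pw]; linarith

lemma exists_eq_append_cons_append_cons_of_not_nodup {l : List V} (h : ¬ l.Nodup) :
    ∃ (a : List V) (z : V) (b c : List V), l = a ++ z :: (b ++ z :: c) := by
  induction l with
  | nil => simp at h
  | cons x xs ih =>
    by_cases hx : x ∈ xs
    · obtain ⟨b, c, rfl⟩ := List.append_of_mem hx
      exact ⟨[], x, b, c, rfl⟩
    · obtain ⟨a, z, b, c, rfl⟩ := ih (by simpa [hx] using h)
      exact ⟨x :: a, z, b, c, rfl⟩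

lemma IsWalk.exists_shorter_of_not_nodup {s t : V} {p : List V} (hp : G.IsWalk s t p)
    (hnd : ¬ p.Nodup) : ∃ q, G.IsWalk s t q ∧ q.length < p.length ∧ G.pw q < G.pw p := by
  obtain ⟨a, z, b, c, rfl⟩ := exists_eq_append_cons_append_cons_of_not_nodup hnd
  obtain ⟨ha, hzbc⟩ := isWalk_append_cons_iff.1 hp
  rw [← List.cons_append] at hzbc
  obtain ⟨hcycle, hc⟩ := isWalk_append_cons_iff.1 hzbc
  refine ⟨a ++ z :: c, isWalk_append_cons_iff.2 ⟨ha, hc⟩, by simp, ?_⟩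
  have := pw_pos hcycle.1 (by simp)
  rw [pw_append_cons a c, pw_append_cons a (b ++ z :: c), ← List.cons_append,
    pw_append_cons (z :: b) c]
  linarith

lemma dist_le_pw_of_isWalk {s t : V} {p : List V} (hp : G.IsWalk s t p) :
    G.dist s t ≤ G.pw p := by
  induction hn : p.length using Nat.strong_induction_on generalizing p with
  | _ n ih =>
    by_cases hnd : p.Nodup
    · exact sInf_le ⟨p, isPath_iff.2 ⟨hp, hnd⟩, rfl⟩
    · obtain ⟨q, hq, hlen, hlt⟩ := hp.exists_shorter_of_not_nodup hnd
      exact (ih _ (hn ▸ hlen) hq rfl).trans (EReal.coe_le_coe_iff.2 hlt.le)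

lemma mem_SP_of_isWalk {s t : V} {p : List V} (hp : G.IsWalk s t p)
    (he : (G.pw p : EReal) = G.dist s t) : p ∈ G.SP s t := by
  refine ⟨isPath_iff.2 ⟨hp, ?_⟩, he⟩
  by_contra hnd
  obtain ⟨q, hq, -, hlt⟩ := hp.exists_shorter_of_not_nodup hnd
  have := dist_le_pw_of_isWalk hq
  rw [← he] at this
  exact absurd (EReal.coe_le_coe_iff.1 this) (not_le.2 hlt)

lemma prefix_mem_SP {s t z : V} {l c : List V} (hp : l ++ z :: c ∈ G.SP s t) :
    l ++ [z] ∈ G.SP s z := by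
  obtain ⟨hpath, hpw⟩ := hp
  obtain ⟨hwalk, hnd⟩ := isPath_iff.1 hpath
  obtain ⟨hl, hc⟩ := isWalk_append_cons_iff.1 hwalk
  have hmin : ∀ q, G.IsWalk s z q → G.pw (l ++ [z]) ≤ G.pw q := by
    intro q hq
    obtain ⟨l', rfl⟩ := List.getLast?_eq_some_iff.1 hq.2.2
    have := dist_le_pw_of_isWalk (isWalk_append_cons_iff.2 ⟨hq, hc⟩)
    rw [← hpw, EReal.coe_le_coe_iff, pw_append_cons l, pw_append_cons l'] at this
    linarith
  refine ⟨isPath_iff.2 ⟨hl, hnd.sublist (by simp)⟩, le_antisymm ?_ (sInf_le ?_)⟩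
  · refine le_sInf ?_
    rintro _ ⟨q, hq, rfl⟩
    exact EReal.coe_le_coe_iff.2 (hmin q (isPath_iff.1 hq).1)
  · exact ⟨l ++ [z], isPath_iff.2 ⟨hl, hnd.sublist (by simp)⟩, rfl⟩

lemma append_mem_SP_of_mem_SP {s w t : V} {r r' c : List V} (hr : r ∈ G.SP s w)
    (hr' : r' ∈ G.SP s w) (h : r ++ c ∈ G.SP s t) : r' ++ c ∈ G.SP s t := by
  obtain ⟨l, rfl⟩ := List.getLast?_eq_some_iff.1 hr.1.2.2.1
  obtain ⟨l', rfl⟩ := List.getLast?_eq_some_iff.1 hr'.1.2.2.1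
  simp only [List.append_assoc, List.singleton_append] at h ⊢
  have hc := (isWalk_append_cons_iff.1 (isPath_iff.1 h.1).1).2
  refine mem_SP_of_isWalk (isWalk_append_cons_iff.2 ⟨(isPath_iff.1 hr'.1).1, hc⟩) ?_
  rw [← h.2, pw_append_cons l', pw_append_cons l, EReal.coe_add, EReal.coe_add, hr.2, hr'.2]

lemma eq_of_isPrefix_of_getLast? {p r r' : List V} {w : V} (hp : p.Nodup) (hr : r <+: p)
    (hr' : r' <+: p) (hw : r.getLast? = some w) (hw' : r'.getLast? = some w) : r = r' := by
  wlog hle : r.length ≤ r'.length generalizing r r'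
  · exact (this hr' hr hw' hw (by omega)).symm
  obtain ⟨d, rfl⟩ := List.prefix_of_prefix_length_le hr hr' hle
  rcases d.eq_nil_or_concat with rfl | ⟨d', v, rfl⟩
  · simp
  · rw [List.concat_eq_append, ← List.append_assoc, List.getLast?_concat,
      Option.some.injEq] at hw'
    subst hw'
    have hnd := List.nodup_append.1 (hp.sublist hr'.sublist)
    exact absurd rfl (hnd.2.2 v (List.mem_of_getLast? hw) v (by simp))

def SPTail (G : WDigraph V) (s w t : V) : Set (List V) :=
  {c | ∃ r ∈ G.SP s w, r ++ c ∈ G.SP s t}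

lemma ncard_SP_isPrefix {s w t : V} {A : Set (List V)} (hA : A ⊆ G.SP s w) :
    {p ∈ G.SP s t | ∃ r ∈ A, r <+: p}.ncard = A.ncard * (G.SPTail s w t).ncard := by
  have himage : {p ∈ G.SP s t | ∃ r ∈ A, r <+: p} =
      (fun rc : List V × List V => rc.1 ++ rc.2) '' (A ×ˢ G.SPTail s w t) := by
    ext p
    constructor
    · rintro ⟨hp, r, hr, c, rfl⟩
      exact ⟨(r, c), ⟨hr, r, hA hr, hp⟩, rfl⟩
    · rintro ⟨⟨r, c⟩, ⟨hr, r₀, hr₀, hc⟩, rfl⟩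
      exact ⟨append_mem_SP_of_mem_SP hr₀ (hA hr) hc, r, hr, List.prefix_append r c⟩
  have hinj : Set.InjOn (fun rc : List V × List V => rc.1 ++ rc.2) (A ×ˢ G.SPTail s w t) := by
    rintro ⟨r, c⟩ ⟨hr, r₀, hr₀, hc⟩ ⟨r', c'⟩ ⟨hr', -⟩ (heq : r ++ c = r' ++ c')
    have hp := append_mem_SP_of_mem_SP hr₀ (hA hr) hc
    obtain rfl : r = r' := eq_of_isPrefix_of_getLast? (isPath_iff.1 hp.1).2
      (List.prefix_append r c) (heq ▸ List.prefix_append r' c') (hA hr).1.2.2.1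
      (hA hr').1.2.2.1
    rw [List.append_cancel_left heq]
  rw [himage, hinj.ncard_image, Set.ncard_prod]

lemma sigmaV_eq_sigma_mul_ncard_SPTail (s t w : V) :
    G.sigmaV s t w = G.sigma s w * (G.SPTail s w t).ncard := by
  rw [sigma, ← ncard_SP_isPrefix (t := t) subset_rfl, sigmaV]
  congr 1
  ext p
  refine and_congr_right fun hp => ⟨fun hw => ?_, ?_⟩
  · obtain ⟨l, c, rfl⟩ := List.append_of_mem hw
    exact ⟨l ++ [w], prefix_mem_SP hp, by simp⟩
  · rintro ⟨r, hr, hrp⟩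
    exact hrp.subset (List.mem_of_getLast? hr.1.2.2.1)

lemma append_singleton_mem_SP_of_mem_pred {s x w : V} {r : List V} (hx : x ∈ G.pred s w)
    (hr : r ∈ G.SP s x) : r ++ [w] ∈ G.SP s w := by
  obtain ⟨l, rfl⟩ := List.getLast?_eq_some_iff.1 hr.1.2.2.1
  rw [List.append_assoc, List.singleton_append]
  refine mem_SP_of_isWalk (isWalk_append_cons_iff.2
    ⟨(isPath_iff.1 hr.1).1, List.isChain_pair.2 hx.1, rfl, rfl⟩) ?_
  rw [pw_append_cons, EReal.coe_add, hr.2, ← hx.2.1]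
  simp [pw]

lemma sigmaE_eq_sigma_mul_ncard_SPTail {s t x w : V} (hx : x ∈ G.pred s w) :
    G.sigmaE s t x w = G.sigma s x * (G.SPTail s w t).ncard := by
  have hA : (· ++ [w]) '' G.SP s x ⊆ G.SP s w := by
    rintro _ ⟨r, hr, rfl⟩
    exact append_singleton_mem_SP_of_mem_pred hx hr
  rw [sigma, ← Set.ncard_image_of_injective _ (List.append_left_injective [w]),
    ← ncard_SP_isPrefix hA, sigmaE]
  congr 1
  ext p
  refine and_congr_right fun hp => ⟨?_, ?_⟩
  · rintro ⟨l₁, l₂, rfl⟩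
    have hp' : l₁ ++ x :: w :: l₂ ∈ G.SP s t := by simpa using hp
    exact ⟨l₁ ++ [x] ++ [w], ⟨l₁ ++ [x], prefix_mem_SP hp', rfl⟩, l₂, by simp⟩
  · rintro ⟨_, ⟨r, hr, rfl⟩, hrp⟩
    obtain ⟨l, rfl⟩ := List.getLast?_eq_some_iff.1 hr.1.2.2.1
    exact List.IsInfix.trans ⟨l, [], by simp⟩ hrp.isInfix

lemma sigma_pos_of_dist_lt_top [Fintype V] {s t : V} (h : G.dist s t < ⊤) :
    0 < G.sigma s t := by
  have hfin : {p | G.IsPath s t p}.Finite :=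
    (List.finite_length_le V (Fintype.card V)).subset fun p hp => hp.2.2.2.length_le_card
  have hne : {p | G.IsPath s t p}.Nonempty := by
    by_contra hc
    rw [Set.not_nonempty_iff_eq_empty] at hc
    simp [dist, hc] at h
  obtain ⟨p, hp, hpw⟩ := (hne.image fun p => (G.pw p : EReal)).csInf_mem (hfin.image _)
  exact (Set.ncard_pos (hfin.subset fun q hq => hq.1)).2 ⟨p, hp, hpw⟩

variable [Fintype V] [DecidableEq V]

theorem sigmaE_eq_ratio_general (G : WDigraph V) (s t x w : V)
    (hx : x ∈ G.pred s w) :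
    G.sigma s w * G.sigmaE s t x w = G.sigma s x * G.sigmaV s t w ∧
      (G.sigmaE s t x w : ℝ) =
        (G.sigma s x : ℝ) / (G.sigma s w : ℝ) * (G.sigmaV s t w : ℝ) := by
  have hE := sigmaE_eq_sigma_mul_ncard_SPTail (t := t) hx
  have hV := sigmaV_eq_sigma_mul_ncard_SPTail (G := G) s t w
  have hw : (G.sigma s w : ℝ) ≠ 0 := by exact_mod_cast (sigma_pos_of_dist_lt_top hx.2.2).ne'
  refine ⟨by rw [hE, hV]; ring, ?_⟩
  rw [hE, hV]
  push_cast
  field_simp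

/-- Let `s, t, x, w ∈ V` with `x ∈ P_s(w)`, `x ∉ {s,t}` and `t ≠ w`,
and let `σ_{st}(x,w)` be the number of shortest `s`-`t` paths using the edge `(x,w)`.
Then `σ_{sw} · σ_{st}(x,w) = σ_{sx} · σ_{st}(w)`; equivalently,
`σ_{st}(x,w) = (σ_{sx}/σ_{sw}) · σ_{st}(w)`. -/
theorem sigmaE_eq_ratio (G : WDigraph V) (s t x w : V)
    (hx : x ∈ G.pred s w) (hxs : x ≠ s) (hxt : x ≠ t) (htw : t ≠ w) :
    G.sigma s w * G.sigmaE s t x w = G.sigma s x * G.sigmaV s t w ∧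
      (G.sigmaE s t x w : ℝ) =
        (G.sigma s x : ℝ) / (G.sigma s w : ℝ) * (G.sigmaV s t w : ℝ) :=
  sigmaE_eq_ratio_general G s t x w hx

end WDigraph
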